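/- arXiv:2605.05446 — 4 statements merged into one kernel-verified Lean document; each statement's English description precedes it below -/
import Mathlib

section
/- For matrices Z₁, Z₂ ∈ ℝ^{n×r}, suppose there exists an orthogonal R ∈ O(r) such that ‖Z₁ R − Z₂‖_F ≤ c‖Z₁‖ (operator norm) for some constant c > 0. Then ‖Z₁Z₁ᵀ − Z₂Z₂ᵀ‖_F ≤ (2 + c)‖Z₁‖ · ‖Z₁R − Z₂‖_F. -/
open Matrix

/-- Squared Frobenius norm of a real matrix. -/
noncomputable def frobSq {n r : ℕ} (A : Matrix (Fin n) (Fin r) ℝ) : ℝ :=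
  ∑ i, ∑ j, (A i j) ^ 2

/-- Frobenius norm of a real matrix. -/
noncomputable def frobNorm {n r : ℕ} (A : Matrix (Fin n) (Fin r) ℝ) : ℝ :=
  Real.sqrt (frobSq A)

/-- Spectral (ℓ₂ operator) norm of a real matrix. -/
noncomputable def opNorm {m k : ℕ} (A : Matrix (Fin m) (Fin k) ℝ) : ℝ :=
  ‖LinearMap.toContinuousLinearMap (Matrix.toEuclideanLin A)‖


lemma frobSq_nonneg {n r : ℕ} (A : Matrix (Fin n) (Fin r) ℝ) : 0 ≤ frobSq A := by
  unfold frobSq; positivity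

lemma frobNorm_nonneg {n r : ℕ} (A : Matrix (Fin n) (Fin r) ℝ) : 0 ≤ frobNorm A :=
  Real.sqrt_nonneg _

lemma frobNorm_sq {n r : ℕ} (A : Matrix (Fin n) (Fin r) ℝ) : frobNorm A ^ 2 = frobSq A :=
  Real.sq_sqrt (frobSq_nonneg A)

lemma opNorm_nonneg' {m k : ℕ} (A : Matrix (Fin m) (Fin k) ℝ) : 0 ≤ opNorm A :=
  norm_nonneg _

lemma frobSq_transpose {n r : ℕ} (A : Matrix (Fin n) (Fin r) ℝ) : frobSq Aᵀ = frobSq A := by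
  unfold frobSq; rw [Finset.sum_comm]; rfl

lemma frobNorm_transpose' {n r : ℕ} (A : Matrix (Fin n) (Fin r) ℝ) : frobNorm Aᵀ = frobNorm A := by
  unfold frobNorm; rw [frobSq_transpose]

lemma euclid_sq {k : ℕ} (x : EuclideanSpace ℝ (Fin k)) : ‖x‖ ^ 2 = ∑ j, (x j) ^ 2 := by
  rw [EuclideanSpace.norm_eq, Real.sq_sqrt (by positivity)]
  simp [Real.norm_eq_abs, sq_abs]

section FrobSec
attribute [local instance] Matrix.frobeniusNormedAddCommGroup

lemma frobNorm_eq_norm {n r : ℕ} (A : Matrix (Fin n) (Fin r) ℝ) : frobNorm A = ‖A‖ := by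
  rw [Matrix.frobenius_norm_def, ← Real.sqrt_eq_rpow]
  unfold frobNorm frobSq
  congr 1
  refine Finset.sum_congr rfl fun i _ => Finset.sum_congr rfl fun j _ => ?_
  rw [Real.rpow_two, Real.norm_eq_abs, sq_abs]

lemma frobNorm_add_le {n r : ℕ} (A B : Matrix (Fin n) (Fin r) ℝ) :
    frobNorm (A + B) ≤ frobNorm A + frobNorm B := by
  rw [frobNorm_eq_norm, frobNorm_eq_norm, frobNorm_eq_norm]; exact norm_add_le A B

end FrobSec

section OpSec
open scoped Matrix.Norms.L2Operator

lemma opNorm_eq {m k : ℕ} (A : Matrix (Fin m) (Fin k) ℝ) : opNorm A = ‖A‖ := rfl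

lemma opNorm_transpose' {m k : ℕ} (A : Matrix (Fin m) (Fin k) ℝ) : opNorm Aᵀ = opNorm A := by
  rw [opNorm_eq, opNorm_eq, ← conjTranspose_eq_transpose_of_trivial, Matrix.l2_opNorm_conjTranspose]

lemma opNorm_mul_le' {m k l : ℕ} (A : Matrix (Fin m) (Fin k) ℝ) (B : Matrix (Fin k) (Fin l) ℝ) :
    opNorm (A * B) ≤ opNorm A * opNorm B := by
  rw [opNorm_eq, opNorm_eq, opNorm_eq]; exact Matrix.l2_opNorm_mul A B

lemma opNorm_sub_le' {m k : ℕ} (A B : Matrix (Fin m) (Fin k) ℝ) :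
    opNorm (A - B) ≤ opNorm A + opNorm B := by
  rw [opNorm_eq, opNorm_eq, opNorm_eq]; exact norm_sub_le A B

lemma opNorm_orth_le_one {k : ℕ} (R : Matrix (Fin k) (Fin k) ℝ) (hR : Rᵀ * R = 1) :
    opNorm R ≤ 1 := by
  have h1 : opNorm R * opNorm R = ‖(1 : Matrix (Fin k) (Fin k) ℝ)‖ := by
    rw [opNorm_eq, ← Matrix.l2_opNorm_conjTranspose_mul_self,
      conjTranspose_eq_transpose_of_trivial, hR]
  have h2 : ‖(1 : Matrix (Fin k) (Fin k) ℝ)‖ ≤ 1 := by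
    rw [Matrix.l2_opNorm_def]
    have he : (Matrix.toEuclideanLin (𝕜 := ℝ) (m := Fin k) (n := Fin k)).trans
        LinearMap.toContinuousLinearMap 1 = ContinuousLinearMap.id ℝ _ := by
      apply ContinuousLinearMap.coe_injective
      ext x i
      simp [Matrix.toEuclideanLin_apply]
    rw [he]
    exact ContinuousLinearMap.norm_id_le
  nlinarith [opNorm_nonneg' R]

lemma frobSq_mul_le {m k l : ℕ} (A : Matrix (Fin m) (Fin k) ℝ) (B : Matrix (Fin k) (Fin l) ℝ) :
    frobSq (A * B) ≤ opNorm A ^ 2 * frobSq B := by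
  have key : ∀ j, (∑ i, ((A * B) i j) ^ 2) ≤ opNorm A ^ 2 * ∑ i, (B i j) ^ 2 := by
    intro j
    set x : EuclideanSpace ℝ (Fin k) := (WithLp.equiv 2 _).symm (fun i => B i j) with hx
    set y : EuclideanSpace ℝ (Fin m) := (EuclideanSpace.equiv (Fin m) ℝ).symm (A *ᵥ fun i => B i j)
      with hy
    have h1 : (∑ i, ((A * B) i j) ^ 2) = ‖y‖ ^ 2 := by
      rw [euclid_sq]
      refine Finset.sum_congr rfl fun i _ => ?_
      first
      | rfl
      | (congr 1; simp [hy, Matrix.mul_apply, Matrix.mulVec, dotProduct])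
    have h2 : ‖y‖ ≤ ‖A‖ * ‖x‖ := Matrix.l2_opNorm_mulVec A x
    have hxn : ‖x‖ ^ 2 = ∑ i, (B i j) ^ 2 := by
      rw [euclid_sq]; exact Finset.sum_congr rfl fun i _ => rfl
    have hA : opNorm A = ‖A‖ := rfl
    rw [h1, hA]
    calc ‖y‖ ^ 2 ≤ (‖A‖ * ‖x‖) ^ 2 := by
          nlinarith [norm_nonneg y, norm_nonneg x, norm_nonneg A]
      _ = ‖A‖ ^ 2 * ∑ i, (B i j) ^ 2 := by rw [mul_pow, hxn]
  calc frobSq (A * B) = ∑ j, ∑ i, ((A * B) i j) ^ 2 := Finset.sum_comm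
    _ ≤ ∑ j, opNorm A ^ 2 * ∑ i, (B i j) ^ 2 := Finset.sum_le_sum fun j _ => key j
    _ = opNorm A ^ 2 * frobSq B := by
        rw [← Finset.mul_sum]; unfold frobSq; congr 1; exact Finset.sum_comm

end OpSec

lemma frobNorm_mul_le_op_left {m k l : ℕ} (A : Matrix (Fin m) (Fin k) ℝ)
    (B : Matrix (Fin k) (Fin l) ℝ) : frobNorm (A * B) ≤ opNorm A * frobNorm B := by
  have h := frobSq_mul_le A B
  have := Real.sqrt_le_sqrt h
  unfold frobNorm at *
  calc Real.sqrt (frobSq (A * B)) ≤ Real.sqrt (opNorm A ^ 2 * frobSq B) := this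
    _ = opNorm A * Real.sqrt (frobSq B) := by
        rw [Real.sqrt_mul (by positivity), Real.sqrt_sq (opNorm_nonneg' A)]

lemma frobNorm_mul_le_op_right {m k l : ℕ} (A : Matrix (Fin m) (Fin k) ℝ)
    (B : Matrix (Fin k) (Fin l) ℝ) : frobNorm (A * B) ≤ frobNorm A * opNorm B := by
  calc frobNorm (A * B) = frobNorm (A * B)ᵀ := (frobNorm_transpose' _).symm
    _ = frobNorm (Bᵀ * Aᵀ) := by rw [Matrix.transpose_mul]
    _ ≤ opNorm Bᵀ * frobNorm Aᵀ := frobNorm_mul_le_op_left _ _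
    _ = frobNorm A * opNorm B := by rw [opNorm_transpose', frobNorm_transpose']; ring

lemma opNorm_le_frobNorm {m k : ℕ} (A : Matrix (Fin m) (Fin k) ℝ) : opNorm A ≤ frobNorm A := by
  unfold opNorm
  apply ContinuousLinearMap.opNorm_le_bound _ (frobNorm_nonneg A)
  intro x
  have hy : (LinearMap.toContinuousLinearMap (Matrix.toEuclideanLin A)) x =
      (WithLp.equiv 2 (Fin m → ℝ)).symm (A *ᵥ (WithLp.equiv 2 (Fin k → ℝ)) x) :=
    Matrix.toEuclideanLin_apply A x
  have hb : ‖(LinearMap.toContinuousLinearMap (Matrix.toEuclideanLin A)) x‖ ^ 2 ≤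
      (frobNorm A * ‖x‖) ^ 2 := by
    rw [hy, euclid_sq]
    have hxsq : ‖x‖ ^ 2 = ∑ j, (x j) ^ 2 := euclid_sq x
    have cs : ∀ i, ((A *ᵥ (WithLp.equiv 2 (Fin k → ℝ)) x) i) ^ 2 ≤
        (∑ j, (A i j) ^ 2) * ∑ j, (x j) ^ 2 := by
      intro i
      have := Finset.sum_mul_sq_le_sq_mul_sq Finset.univ (fun j => A i j) (fun j => x j)
      simpa [Matrix.mulVec, dotProduct] using this
    calc (∑ i, (((WithLp.equiv 2 (Fin m → ℝ)).symm (A *ᵥ (WithLp.equiv 2 (Fin k → ℝ)) x) :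
            EuclideanSpace ℝ (Fin m)) i) ^ 2)
        = ∑ i, ((A *ᵥ (WithLp.equiv 2 (Fin k → ℝ)) x) i) ^ 2 := rfl
      _ ≤ ∑ i, (∑ j, (A i j) ^ 2) * ∑ j, (x j) ^ 2 := Finset.sum_le_sum fun i _ => cs i
      _ = frobSq A * ‖x‖ ^ 2 := by rw [← Finset.sum_mul, hxsq]; rfl
      _ = (frobNorm A * ‖x‖) ^ 2 := by rw [mul_pow, frobNorm_sq]
  have h0 : 0 ≤ frobNorm A * ‖x‖ := mul_nonneg (frobNorm_nonneg A) (norm_nonneg x)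
  nlinarith [norm_nonneg ((LinearMap.toContinuousLinearMap (Matrix.toEuclideanLin A)) x)]

/-- If there is an orthogonal `R` with `‖Z₁R − Z₂‖_F ≤ c‖Z₁‖`, then
`‖Z₁Z₁ᵀ − Z₂Z₂ᵀ‖_F ≤ (2+c)‖Z₁‖‖Z₁R − Z₂‖_F`. -/
theorem prod_error_from_aligned_factor_error {n r : ℕ}
    (Z₁ Z₂ : Matrix (Fin n) (Fin r) ℝ) (R : Matrix (Fin r) (Fin r) ℝ)
    (c : ℝ) (hc : 0 < c)
    (hR : Rᵀ * R = 1)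
    (h : frobNorm (Z₁ * R - Z₂) ≤ c * opNorm Z₁) :
    frobNorm (Z₁ * Z₁ᵀ - Z₂ * Z₂ᵀ) ≤ (2 + c) * opNorm Z₁ * frobNorm (Z₁ * R - Z₂) := by
  set E := Z₁ * R - Z₂ with hE
  have hR' : R * Rᵀ = 1 := mul_eq_one_comm.mp hR
  have h1 : Z₁ * R * (Z₁ * R)ᵀ = Z₁ * Z₁ᵀ := by
    rw [Matrix.transpose_mul, ← Matrix.mul_assoc, Matrix.mul_assoc Z₁ R Rᵀ, hR', Matrix.mul_one]
  have key : Z₁ * Z₁ᵀ - Z₂ * Z₂ᵀ = E * (Z₁ * R)ᵀ + Z₂ * Eᵀ := by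
    rw [hE, Matrix.sub_mul, Matrix.transpose_sub, Matrix.mul_sub, h1]
    abel
  have t1 : frobNorm (E * (Z₁ * R)ᵀ) ≤ frobNorm E * opNorm Z₁ := by
    calc frobNorm (E * (Z₁ * R)ᵀ) ≤ frobNorm E * opNorm (Z₁ * R)ᵀ :=
          frobNorm_mul_le_op_right _ _
      _ = frobNorm E * opNorm (Z₁ * R) := by rw [opNorm_transpose']
      _ ≤ frobNorm E * (opNorm Z₁ * opNorm R) := by
          exact mul_le_mul_of_nonneg_left (opNorm_mul_le' _ _) (frobNorm_nonneg E)
      _ ≤ frobNorm E * (opNorm Z₁ * 1) := by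
          have hr := opNorm_orth_le_one R hR
          have h0 := opNorm_nonneg' Z₁
          have h1 := frobNorm_nonneg E
          nlinarith [mul_nonneg (mul_nonneg h1 h0) (sub_nonneg.mpr hr)]
      _ = frobNorm E * opNorm Z₁ := by ring
  have hZ₂ : opNorm Z₂ ≤ (1 + c) * opNorm Z₁ := by
    have : opNorm Z₂ ≤ opNorm (Z₁ * R) + opNorm E := by
      have h3 : Z₂ = Z₁ * R - E := by rw [hE]; abel
      rw [h3]; exact opNorm_sub_le' _ _
    have h4 : opNorm (Z₁ * R) ≤ opNorm Z₁ := by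
      calc opNorm (Z₁ * R) ≤ opNorm Z₁ * opNorm R := opNorm_mul_le' _ _
        _ ≤ opNorm Z₁ * 1 := mul_le_mul_of_nonneg_left (opNorm_orth_le_one R hR)
            (opNorm_nonneg' Z₁)
        _ = opNorm Z₁ := mul_one _
    have h5 : opNorm E ≤ c * opNorm Z₁ := le_trans (opNorm_le_frobNorm E) h
    linarith
  have t2 : frobNorm (Z₂ * Eᵀ) ≤ (1 + c) * opNorm Z₁ * frobNorm E := by
    calc frobNorm (Z₂ * Eᵀ) ≤ opNorm Z₂ * frobNorm Eᵀ := frobNorm_mul_le_op_left _ _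
      _ = opNorm Z₂ * frobNorm E := by rw [frobNorm_transpose']
      _ ≤ (1 + c) * opNorm Z₁ * frobNorm E :=
          mul_le_mul_of_nonneg_right hZ₂ (frobNorm_nonneg E)
  calc frobNorm (Z₁ * Z₁ᵀ - Z₂ * Z₂ᵀ) = frobNorm (E * (Z₁ * R)ᵀ + Z₂ * Eᵀ) := by rw [key]
    _ ≤ frobNorm (E * (Z₁ * R)ᵀ) + frobNorm (Z₂ * Eᵀ) := frobNorm_add_le _ _
    _ ≤ frobNorm E * opNorm Z₁ + (1 + c) * opNorm Z₁ * frobNorm E := by linarith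
    _ = (2 + c) * opNorm Z₁ * frobNorm E := by ring
end

section
/- Fix U* ∈ ℝ^{n×r}, V* ∈ ℝ^{q×r} and U ∈ ℝ^{n×r}, V ∈ ℝ^{q×r}. Define Φ(G) := n⁻¹‖U G − U*‖_F² + q⁻¹‖V G^{−T} − V*‖_F² for invertible G ∈ GL(r). If the identity matrix I_r is a local minimizer of Φ over GL(r), then n⁻¹(U − U*)ᵀ U − q⁻¹ Vᵀ(V − V*) = 0. -/
open Matrix

set_option maxHeartbeats 1000000 in
/-- If the identity is a local minimizer over `GL(r)` of
`Φ(G) = n⁻¹‖UG − U*‖_F² + q⁻¹‖VG^{−T} − V*‖_F²`, then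
`n⁻¹(U − U*)ᵀU − q⁻¹Vᵀ(V − V*) = 0`. -/
theorem alignment_first_order_condition {n q r : ℕ}
    (Ustar U : Matrix (Fin n) (Fin r) ℝ) (Vstar V : Matrix (Fin q) (Fin r) ℝ)
    (hloc : ∃ ε > (0 : ℝ), ∀ G : Matrix (Fin r) (Fin r) ℝ, IsUnit G.det →
      frobNorm (G - 1) < ε →
      (n : ℝ)⁻¹ * frobSq (U - Ustar) + (q : ℝ)⁻¹ * frobSq (V - Vstar) ≤
        (n : ℝ)⁻¹ * frobSq (U * G - Ustar) + (q : ℝ)⁻¹ * frobSq (V * (G⁻¹)ᵀ - Vstar)) :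
    (n : ℝ)⁻¹ • ((U - Ustar)ᵀ * U) - (q : ℝ)⁻¹ • (Vᵀ * (V - Vstar)) = 0 := by
  obtain ⟨ε, hε, hmin⟩ := hloc
  ext k l
  simp only [Matrix.sub_apply, Matrix.smul_apply, Matrix.zero_apply, smul_eq_mul]
  -- Direction matrix and its square
  set E : Matrix (Fin r) (Fin r) ℝ := single l k 1 with hE
  set c : ℝ := if l = k then 1 else 0 with hc
  have hE2 : E * E = c • E := by
    by_cases h : l = k
    · subst h; simp [hE, hc]
    · rw [hE, Matrix.single_mul_single_of_ne (h := fun e : k = l => h e.symm)]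
      simp [hc, h]
  set A : Matrix (Fin n) (Fin r) ℝ := U - Ustar with hA
  set B : Matrix (Fin n) (Fin r) ℝ := U * E with hB
  set A' : Matrix (Fin q) (Fin r) ℝ := V - Vstar with hA'
  set B' : Matrix (Fin q) (Fin r) ℝ := V * Eᵀ with hB'
  set t : ℝ → ℝ := fun s => s / (1 + c * s) with htdef
  set φ : ℝ → ℝ := fun s =>
      (n : ℝ)⁻¹ * (∑ i, ∑ j, (A i j + s * B i j) ^ 2) +
      (q : ℝ)⁻¹ * (∑ i, ∑ j, (A' i j - t s * B' i j) ^ 2) with hφdef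
  set δ : ℝ := min ε (1/2) with hδdef
  have hδpos : 0 < δ := lt_min hε (by norm_num)
  -- local minimum of φ at 0
  have hφ0 : φ 0 = (n : ℝ)⁻¹ * frobSq A + (q : ℝ)⁻¹ * frobSq A' := by
    simp [hφdef, frobSq, htdef]
  have hlm : IsLocalMin φ 0 := by
    have hev : ∀ᶠ s in nhds (0:ℝ), |s| < δ := by
      have := Metric.ball_mem_nhds (0:ℝ) hδpos
      filter_upwards [this] with s hs
      simpa [Real.dist_eq] using hs
    refine hev.mono fun s hs => ?_
    have hs2 : |s| < 1/2 := lt_of_lt_of_le hs (min_le_right _ _)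
    have hsε : |s| < ε := lt_of_lt_of_le hs (min_le_left _ _)
    have habs := abs_lt.mp hs2
    have hden : 1 + c * s ≠ 0 := by
      by_cases h : l = k <;> simp [hc, h] <;> nlinarith [habs.1, habs.2]
    have hco : s - t s - s * t s * c = 0 := by
      simp only [htdef]; have : 1 + s * c ≠ 0 := by rwa [mul_comm]
      field_simp; ring
    have hG1 : (1 + s • E) * (1 - t s • E) = 1 := by
      have h1 : (s • E) * (t s • E) = (s * t s * c) • E := by
        rw [smul_mul_assoc, mul_smul_comm, hE2, smul_smul, smul_smul]
      have h2 : (1 + s • E) * (1 - t s • E) = 1 + (s - t s - s * t s * c) • E := by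
        simp only [mul_sub, add_mul, one_mul, mul_one, h1]
        module
      rw [h2, hco, zero_smul, add_zero]
    have hdet : IsUnit (1 + s • E).det := Matrix.isUnit_det_of_right_inverse hG1
    have hGinv : (1 + s • E)⁻¹ = 1 - t s • E := Matrix.inv_eq_right_inv hG1
    have hfrob : frobNorm ((1 + s • E) - 1) < ε := by
      have h1 : (1 + s • E) - 1 = s • E := by abel
      have h2 : frobSq (s • E) = s ^ 2 := by
        simp [frobSq, hE, Matrix.smul_apply, Matrix.single, ite_and,
          Finset.sum_ite_eq, apply_ite]
      rw [frobNorm, h1, h2, Real.sqrt_sq_eq_abs]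
      exact hsε
    have hineq := hmin (1 + s • E) hdet hfrob
    have e1 : U * (1 + s • E) - Ustar = A + s • B := by
      rw [Matrix.mul_add, Matrix.mul_one, Matrix.mul_smul, hA, hB]; abel
    have e2 : V * ((1 + s • E)⁻¹)ᵀ - Vstar = A' - t s • B' := by
      rw [hGinv, transpose_sub, transpose_smul, transpose_one, Matrix.mul_sub, Matrix.mul_one,
        Matrix.mul_smul, hA', hB']; abel
    have e1' : frobSq (U * (1 + s • E) - Ustar) = ∑ i, ∑ j, (A i j + s * B i j) ^ 2 := by
      rw [e1]; simp [frobSq, Matrix.add_apply, Matrix.smul_apply, smul_eq_mul]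
    have e2' : frobSq (V * ((1 + s • E)⁻¹)ᵀ - Vstar)
        = ∑ i, ∑ j, (A' i j - t s * B' i j) ^ 2 := by
      rw [e2]; simp [frobSq, Matrix.sub_apply, Matrix.smul_apply, smul_eq_mul]
    have hφs : φ s = (n : ℝ)⁻¹ * frobSq (U * (1 + s • E) - Ustar) +
        (q : ℝ)⁻¹ * frobSq (V * ((1 + s • E)⁻¹)ᵀ - Vstar) := by
      simp only [hφdef]; rw [e1', e2']
    rw [hφ0, hφs]; exact hineq
  -- derivative of φ at 0
  have ht' : HasDerivAt t 1 0 := by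
    have h := (hasDerivAt_id (0:ℝ)).fun_div
      ((hasDerivAt_const (0:ℝ) (1:ℝ)).fun_add ((hasDerivAt_id (0:ℝ)).const_mul c)) (by norm_num)
    simpa [htdef] using h
  have h1 : ∀ (i : Fin n) (j : Fin r),
      HasDerivAt (fun s : ℝ => (A i j + s * B i j) ^ 2) (2 * A i j * B i j) 0 := by
    intro i j
    have h : HasDerivAt (fun s : ℝ => A i j + s * B i j) (B i j) 0 := by
      simpa using (hasDerivAt_const (0:ℝ) (A i j)).fun_add ((hasDerivAt_id (0:ℝ)).mul_const (B i j))
    simpa [mul_comm] using h.fun_pow 2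
  have h2 : ∀ (i : Fin q) (j : Fin r),
      HasDerivAt (fun s : ℝ => (A' i j - t s * B' i j) ^ 2) (2 * A' i j * (-(B' i j))) 0 := by
    intro i j
    have h : HasDerivAt (fun s : ℝ => A' i j - t s * B' i j) (-(B' i j)) 0 := by
      simpa using (hasDerivAt_const (0:ℝ) (A' i j)).fun_sub (ht'.mul_const (B' i j))
    have : HasDerivAt (fun s : ℝ => (A' i j - t s * B' i j) ^ 2) _ 0 := h.fun_pow 2
    have ht0 : t 0 = 0 := by simp [htdef]
    rw [ht0] at this
    convert this using 1
    ring
  have hsum1 : HasDerivAt (fun s : ℝ => ∑ i, ∑ j, (A i j + s * B i j) ^ 2)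
      (∑ i, ∑ j, 2 * A i j * B i j) 0 :=
    HasDerivAt.fun_sum fun i _ => HasDerivAt.fun_sum fun j _ => h1 i j
  have hsum2 : HasDerivAt (fun s : ℝ => ∑ i, ∑ j, (A' i j - t s * B' i j) ^ 2)
      (∑ i, ∑ j, 2 * A' i j * (-(B' i j))) 0 :=
    HasDerivAt.fun_sum fun i _ => HasDerivAt.fun_sum fun j _ => h2 i j
  have hd : HasDerivAt φ
      ((n : ℝ)⁻¹ * (∑ i, ∑ j, 2 * A i j * B i j) +
       (q : ℝ)⁻¹ * (∑ i, ∑ j, 2 * A' i j * (-(B' i j)))) 0 :=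
    (hsum1.const_mul _).add (hsum2.const_mul _)
  have hD0 : (n : ℝ)⁻¹ * (∑ i, ∑ j, 2 * A i j * B i j) +
      (q : ℝ)⁻¹ * (∑ i, ∑ j, 2 * A' i j * (-(B' i j))) = 0 := by
    rw [← hd.deriv]; exact hlm.deriv_eq_zero
  -- compute the sums
  have hS1 : (∑ i, ∑ j, 2 * A i j * B i j) = 2 * ∑ i, A i k * U i l := by
    simp [hB, hE, Matrix.mul_apply, Matrix.single, ite_and, Finset.sum_ite_eq,
      apply_ite, Finset.mul_sum, mul_comm]
    ring_nf
  have hS2 : (∑ i, ∑ j, 2 * A' i j * (-(B' i j))) = -(2 * ∑ i, V i k * A' i l) := by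
    simp [hB', hE, Matrix.mul_apply, Matrix.transpose_apply, Matrix.single, ite_and,
      Finset.sum_ite_eq, apply_ite, Finset.mul_sum, mul_comm]
    ring_nf
  rw [hS1, hS2] at hD0
  have hT1 : ((U - Ustar)ᵀ * U) k l = ∑ i, A i k * U i l := by
    simp [hA, Matrix.mul_apply]
  have hT2 : (Vᵀ * (V - Vstar)) k l = ∑ i, V i k * A' i l := by
    simp [hA', Matrix.mul_apply]
  rw [hT1, hT2]
  nlinarith [hD0]
end

section
/- Let Z*, W ∈ ℝ^{n×r}. Combining the identities ‖Z*Wᵀ + WZ*ᵀ‖_F² = 2‖W(Z*)ᵀ‖_F² + 2tr((WᵀZ*)²) and (1/2)‖(Z*)ᵀW − WᵀZ*‖_F² = ‖WᵀZ*‖_F² − tr((WᵀZ*)²), one obtains (1/2)‖Z*Wᵀ + WZ*ᵀ‖_F² + (1/2)‖(Z*)ᵀW − WᵀZ*‖_F² = ‖W(Z*)ᵀ‖_F² + ‖WᵀZ*‖_F² ≥ σ_r(Z*)² ‖W‖_F², where σ_r(Z*) is the r-th singular value of Z*. -/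
open Matrix

lemma frobSq_eq_trace {n r : ℕ} (A : Matrix (Fin n) (Fin r) ℝ) :
    frobSq A = trace (A * Aᵀ) := by
  simp [frobSq, trace, mul_apply, sq, diag]

lemma frobSq_add_transpose {m : ℕ} (A : Matrix (Fin m) (Fin m) ℝ) :
    frobSq (A + Aᵀ) = 2 * frobSq A + 2 * trace (A * A) := by
  have h1 : trace (Aᵀ * Aᵀ) = trace (A * A) := by
    rw [← trace_transpose (A * A), transpose_mul]
  have h2 : trace (Aᵀ * A) = trace (A * Aᵀ) := trace_mul_comm _ _
  rw [frobSq_eq_trace, frobSq_eq_trace]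
  simp only [transpose_add, transpose_transpose, add_mul, mul_add, trace_add]
  linarith

lemma frobSq_sub_transpose {m : ℕ} (A : Matrix (Fin m) (Fin m) ℝ) :
    frobSq (A - Aᵀ) = 2 * frobSq A - 2 * trace (A * A) := by
  have h1 : trace (Aᵀ * Aᵀ) = trace (A * A) := by
    rw [← trace_transpose (A * A), transpose_mul]
  have h2 : trace (Aᵀ * A) = trace (A * Aᵀ) := trace_mul_comm _ _
  rw [frobSq_eq_trace, frobSq_eq_trace]
  simp only [transpose_sub, transpose_transpose, sub_mul, mul_sub, trace_sub]
  linarith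

lemma rayleigh_min {r : ℕ} {G : Matrix (Fin r) (Fin r) ℝ} (hG : G.IsHermitian) (v : Fin r → ℝ) :
    (⨅ i, hG.eigenvalues i) * (∑ j, v j ^ 2) ≤ v ⬝ᵥ (G *ᵥ v) := by
  rcases isEmpty_or_nonempty (Fin r) with h | h
  · simp [dotProduct]
  set U : Matrix (Fin r) (Fin r) ℝ := (hG.eigenvectorUnitary : Matrix (Fin r) (Fin r) ℝ) with hU
  set c : Fin r → ℝ := Uᵀ *ᵥ v with hc
  have hstar : (star (hG.eigenvectorUnitary : Matrix (Fin r) (Fin r) ℝ)) = Uᵀ := by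
    ext i j; simp [hU, star_eq_conjTranspose, conjTranspose_apply]
  have hUU : U * Uᵀ = 1 := by
    rw [← hstar]; exact (Matrix.mem_unitaryGroup_iff).mp (hG.eigenvectorUnitary).2
  have hD : (diagonal (RCLike.ofReal ∘ hG.eigenvalues) : Matrix (Fin r) (Fin r) ℝ)
      = diagonal hG.eigenvalues := by congr 1
  have hv : v ⬝ᵥ (G *ᵥ v) = ∑ i, hG.eigenvalues i * c i ^ 2 := by
    conv_lhs => rw [hG.spectral_theorem, Unitary.conjStarAlgAut_apply, hstar, hD]
    rw [← mulVec_mulVec, ← mulVec_mulVec, dotProduct_mulVec, ← mulVec_transpose, ← hc]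
    simp [dotProduct, mulVec_diagonal, sq]
    exact Finset.sum_congr rfl fun i _ => by ring
  have hnorm : (∑ j, v j ^ 2) = ∑ i, c i ^ 2 := by
    have : c ⬝ᵥ c = v ⬝ᵥ v := by
      rw [hc, dotProduct_mulVec, ← mulVec_transpose, mulVec_mulVec, transpose_transpose, hUU,
        one_mulVec]
    simpa [dotProduct, sq] using this.symm
  rw [hv, hnorm, Finset.mul_sum]
  refine Finset.sum_le_sum fun i _ => ?_
  exact mul_le_mul_of_nonneg_right (ciInf_le (Finite.bddBelow_range _) i) (sq_nonneg _)

/-- Combining the expansions of `‖Z*Wᵀ + WZ*ᵀ‖_F²` and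
`‖(Z*)ᵀW − WᵀZ*‖_F²`, the trace terms cancel:
`(1/2)‖Z*Wᵀ + WZ*ᵀ‖_F² + (1/2)‖(Z*)ᵀW − WᵀZ*‖_F² = ‖W(Z*)ᵀ‖_F² + ‖WᵀZ*‖_F²
 ≥ σ_r(Z*)² ‖W‖_F²`, where `σ_r(Z*)` is the smallest (r-th) singular value of `Z*`,
i.e. the square root of the smallest eigenvalue of `(Z*)ᵀZ*`. -/
theorem regularized_curvature_lower_bound {n r : ℕ}
    (Zstar W : Matrix (Fin n) (Fin r) ℝ)
    (hG : ((Zstarᵀ * Zstar)).IsHermitian) :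
    (1 / 2) * frobSq (Zstar * Wᵀ + W * Zstarᵀ) +
        (1 / 2) * frobSq (Zstarᵀ * W - Wᵀ * Zstar) =
      frobSq (W * Zstarᵀ) + frobSq (Wᵀ * Zstar) ∧
    (Real.sqrt (⨅ i, hG.eigenvalues i)) ^ 2 * frobSq W ≤
      frobSq (W * Zstarᵀ) + frobSq (Wᵀ * Zstar) := by
  constructor
  · have hA : W * Zstarᵀ = (Zstar * Wᵀ)ᵀ := by simp [transpose_mul]
    have hB : Wᵀ * Zstar = (Zstarᵀ * W)ᵀ := by simp [transpose_mul]
    rw [hA, hB, frobSq_add_transpose, frobSq_sub_transpose, frobSq_transpose, frobSq_transpose]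
    have htr : trace ((Zstar * Wᵀ) * (Zstar * Wᵀ)) = trace ((Zstarᵀ * W) * (Zstarᵀ * W)) := by
      have e1 : trace ((Zstar * Wᵀ) * (Zstar * Wᵀ)) = trace ((Wᵀ * Zstar) * (Wᵀ * Zstar)) := by
        rw [Matrix.mul_assoc, trace_mul_comm]
        simp [Matrix.mul_assoc]
      have e2 : trace ((Zstarᵀ * W) * (Zstarᵀ * W)) = trace ((Wᵀ * Zstar) * (Wᵀ * Zstar)) := by
        rw [← trace_transpose ((Zstarᵀ * W) * (Zstarᵀ * W))]
        simp [transpose_mul, Matrix.mul_assoc]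
      rw [e1, e2]
    linarith
  · rcases le_or_gt (⨅ i, hG.eigenvalues i) 0 with hle | hpos
    · have : Real.sqrt (⨅ i, hG.eigenvalues i) = 0 := Real.sqrt_eq_zero'.mpr hle
      rw [this]
      simpa using add_nonneg (frobSq_nonneg _) (frobSq_nonneg _)
    · rw [Real.sq_sqrt hpos.le]
      have key : (⨅ i, hG.eigenvalues i) * frobSq W ≤ frobSq (W * Zstarᵀ) := by
        have hrow : ∀ i, ((⨅ i, hG.eigenvalues i) * ∑ j, (W i j) ^ 2) ≤
            ∑ k, ((W * Zstarᵀ) i k) ^ 2 := by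
          intro i
          have h1 := rayleigh_min hG (fun j => W i j)
          have h2 : (fun j => W i j) ⬝ᵥ ((Zstarᵀ * Zstar) *ᵥ fun j => W i j)
              = ∑ k, ((W * Zstarᵀ) i k) ^ 2 := by
            rw [← mulVec_mulVec, dotProduct_mulVec, vecMul_transpose]
            simp [dotProduct, mulVec, mul_apply, sq, dotProduct, transpose_apply]
            refine Finset.sum_congr rfl fun k _ => ?_
            congr 1 <;> exact Finset.sum_congr rfl fun j _ => mul_comm _ _
          rw [h2] at h1
          exact h1
        calc (⨅ i, hG.eigenvalues i) * frobSq W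
            = ∑ i, ((⨅ i, hG.eigenvalues i) * ∑ j, (W i j) ^ 2) := by
              rw [frobSq, Finset.mul_sum]
          _ ≤ ∑ i, ∑ k, ((W * Zstarᵀ) i k) ^ 2 := Finset.sum_le_sum fun i _ => hrow i
          _ = frobSq (W * Zstarᵀ) := rfl
      linarith [frobSq_nonneg (Wᵀ * Zstar)]
end

section
/- Let A, B ∈ ℝ^{n×r} with n ≥ r, σ_r(B) > 0 and ‖A − B‖_F < σ_r(B), and let R* = argmin over orthogonal R ∈ O(r) of ‖AR − B‖_F. Then ‖R* − I_r‖_F ≤ 2‖A − B‖_F / (σ_r(A) + σ_r(B)). -/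
open Matrix

/-- The smallest (r-th) singular value of an `n × r` real matrix, as the square root of the
smallest eigenvalue of its Gram matrix. -/
noncomputable def smallestSingular {n r : ℕ} (A : Matrix (Fin n) (Fin r) ℝ)
    (hA : (Aᵀ * A).IsHermitian) : ℝ :=
  Real.sqrt (⨅ i, hA.eigenvalues i)

namespace ProcAux


variable {n r m : ℕ}

lemma frobSq_eq_trace (A : Matrix (Fin n) (Fin r) ℝ) : frobSq A = (Aᵀ * A).trace := by
  simp only [frobSq, Matrix.trace, Matrix.diag, Matrix.mul_apply, Matrix.transpose_apply, sq]
  rw [Finset.sum_comm]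

lemma frobSq_nonneg (A : Matrix (Fin n) (Fin r) ℝ) : 0 ≤ frobSq A := by
  apply Finset.sum_nonneg; intro i _; apply Finset.sum_nonneg; intro j _; positivity

lemma frobNorm_nonneg (A : Matrix (Fin n) (Fin r) ℝ) : 0 ≤ frobNorm A := Real.sqrt_nonneg _

lemma frobNorm_sq (A : Matrix (Fin n) (Fin r) ℝ) : frobNorm A ^ 2 = frobSq A :=
  Real.sq_sqrt (frobSq_nonneg A)

lemma frobSq_transpose (A : Matrix (Fin n) (Fin r) ℝ) : frobSq Aᵀ = frobSq A := by
  simp only [frobSq, Matrix.transpose_apply]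
  rw [Finset.sum_comm]

lemma trace_le_frob (X Y : Matrix (Fin n) (Fin r) ℝ) :
    (Xᵀ * Y).trace ≤ frobNorm X * frobNorm Y := by
  have h1 : (Xᵀ * Y).trace = ∑ p : Fin n × Fin r, X p.1 p.2 * Y p.1 p.2 := by
    rw [Fintype.sum_prod_type]
    simp only [Matrix.trace, Matrix.diag, Matrix.mul_apply, Matrix.transpose_apply]
    rw [Finset.sum_comm]
  have h2 : frobSq X = ∑ p : Fin n × Fin r, (X p.1 p.2) ^ 2 := by
    rw [Fintype.sum_prod_type]; rfl
  have h3 : frobSq Y = ∑ p : Fin n × Fin r, (Y p.1 p.2) ^ 2 := by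
    rw [Fintype.sum_prod_type]; rfl
  have hcs := Finset.sum_mul_sq_le_sq_mul_sq Finset.univ
    (fun p : Fin n × Fin r => X p.1 p.2) (fun p => Y p.1 p.2)
  have : (Xᵀ * Y).trace ≤ |(Xᵀ * Y).trace| := le_abs_self _
  refine this.trans ?_
  rw [← Real.sqrt_sq_eq_abs]
  calc Real.sqrt ((Xᵀ * Y).trace ^ 2) ≤ Real.sqrt (frobSq X * frobSq Y) := by
        apply Real.sqrt_le_sqrt; rw [h1, h2, h3]; exact hcs
    _ = frobNorm X * frobNorm Y := Real.sqrt_mul (frobSq_nonneg X) _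

lemma frobSq_add (X Y : Matrix (Fin n) (Fin r) ℝ) :
    frobSq (X + Y) = frobSq X + 2 * (Xᵀ * Y).trace + frobSq Y := by
  simp only [frobSq_eq_trace, Matrix.transpose_add, Matrix.add_mul, Matrix.mul_add,
    Matrix.trace_add]
  have : (Yᵀ * X).trace = (Xᵀ * Y).trace := by
    rw [← Matrix.trace_transpose (Yᵀ * X), Matrix.transpose_mul, Matrix.transpose_transpose]
  rw [this]; ring

lemma frobNorm_add_le (X Y : Matrix (Fin n) (Fin r) ℝ) :
    frobNorm (X + Y) ≤ frobNorm X + frobNorm Y := by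
  have h : frobSq (X + Y) ≤ (frobNorm X + frobNorm Y) ^ 2 := by
    rw [frobSq_add]
    have := trace_le_frob X Y
    have hx := frobNorm_sq X; have hy := frobNorm_sq Y
    nlinarith
  calc frobNorm (X + Y) = Real.sqrt (frobSq (X + Y)) := rfl
    _ ≤ Real.sqrt ((frobNorm X + frobNorm Y) ^ 2) := Real.sqrt_le_sqrt h
    _ = |frobNorm X + frobNorm Y| := Real.sqrt_sq_eq_abs _
    _ = frobNorm X + frobNorm Y := abs_of_nonneg (add_nonneg (frobNorm_nonneg X) (frobNorm_nonneg Y))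

lemma frobSq_mul_orth (X : Matrix (Fin n) (Fin r) ℝ) (R : Matrix (Fin r) (Fin r) ℝ)
    (hR : Rᵀ * R = 1) : frobSq (X * R) = frobSq X := by
  have hRR : R * Rᵀ = 1 := mul_eq_one_comm.mp hR
  rw [frobSq_eq_trace, frobSq_eq_trace, Matrix.transpose_mul]
  rw [show Rᵀ * Xᵀ * (X * R) = Rᵀ * (Xᵀ * X * R) by rw [Matrix.mul_assoc, Matrix.mul_assoc]]
  rw [Matrix.trace_mul_comm, Matrix.mul_assoc, hRR, Matrix.mul_one]



lemma dot_mulVec_self (M : Matrix (Fin n) (Fin r) ℝ) (a b : Fin r → ℝ) :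
    (M *ᵥ a) ⬝ᵥ (M *ᵥ b) = a ⬝ᵥ ((Mᵀ * M) *ᵥ b) := by
  rw [Matrix.dotProduct_mulVec, ← Matrix.vecMul_transpose, Matrix.vecMul_vecMul,
    ← Matrix.dotProduct_mulVec]

lemma iInf_eig_mul_le (H : Matrix (Fin r) (Fin r) ℝ) (hH : H.IsHermitian) (x : Fin r → ℝ) :
    (⨅ i, hH.eigenvalues i) * (x ⬝ᵥ x) ≤ x ⬝ᵥ (H *ᵥ x) := by
  rcases Nat.eq_zero_or_pos r with hr | hr
  · subst hr
    simp [dotProduct, Real.iInf_of_isEmpty]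
  have hne : Nonempty (Fin r) := ⟨⟨0, hr⟩⟩
  set U : Matrix (Fin r) (Fin r) ℝ := (hH.eigenvectorUnitary : Matrix (Fin r) (Fin r) ℝ) with hU
  have hU1 : star U * U = 1 := (Unitary.mem_iff.mp hH.eigenvectorUnitary.2).1
  have hU2 : U * star U = 1 := (Unitary.mem_iff.mp hH.eigenvectorUnitary.2).2
  have hsU : star U = Uᵀ := by
    rw [Matrix.star_eq_conjTranspose, Matrix.conjTranspose_eq_transpose_of_trivial]
  set ev : Fin r → ℝ := hH.eigenvalues with hev
  set D : Matrix (Fin r) (Fin r) ℝ := Matrix.diagonal (RCLike.ofReal ∘ ev) with hD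
  have hspec : H = U * D * star U := hH.spectral_theorem
  clear_value D
  set y : Fin r → ℝ := Uᵀ *ᵥ x with hy
  have hyy : y ⬝ᵥ y = x ⬝ᵥ x := by
    rw [hy, dot_mulVec_self, Matrix.transpose_transpose, ← hsU, hU2, Matrix.one_mulVec]
  have hDrw : D = Matrix.diagonal ev := by
    rw [hD]; congr 1
  have hq : x ⬝ᵥ (H *ᵥ x) = ∑ i, ev i * (y i) ^ 2 := by
    rw [hspec, hsU]
    rw [← Matrix.mulVec_mulVec, ← Matrix.mulVec_mulVec]
    have h5 : x ⬝ᵥ (U *ᵥ (D *ᵥ (Uᵀ *ᵥ x)))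
        = (Uᵀ *ᵥ x) ⬝ᵥ (D *ᵥ (Uᵀ *ᵥ x)) := by
      rw [Matrix.dotProduct_mulVec, ← Matrix.mulVec_transpose]
    rw [h5, hDrw, ← hy]
    simp only [Matrix.mulVec_diagonal, dotProduct]
    apply Finset.sum_congr rfl
    intro i _
    ring
  rw [hq, ← hyy]
  have hbdd : BddBelow (Set.range ev) := (Set.finite_range _).bddBelow
  have h6 : (⨅ i, ev i) * (y ⬝ᵥ y) = ∑ i, (⨅ j, ev j) * (y i) ^ 2 := by
    rw [dotProduct, Finset.mul_sum]
    apply Finset.sum_congr rfl; intro i _; ring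
  rw [h6]
  apply Finset.sum_le_sum
  intro i _
  have h1 : (⨅ j, ev j) ≤ ev i := ciInf_le hbdd i
  nlinarith [sq_nonneg (y i)]



-- frobSq as sum of column norms
lemma frobSq_eq_sum_cols (M : Matrix (Fin n) (Fin r) ℝ) :
    frobSq M = ∑ j, (fun i => M i j) ⬝ᵥ (fun i => M i j) := by
  rw [frobSq, Finset.sum_comm]
  apply Finset.sum_congr rfl; intro j _
  simp [dotProduct, sq]

-- frobSq as sum of row norms
lemma frobSq_eq_sum_rows (M : Matrix (Fin n) (Fin r) ℝ) :
    frobSq M = ∑ i, (M i) ⬝ᵥ (M i) := by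
  rw [frobSq]
  apply Finset.sum_congr rfl; intro i _
  simp [dotProduct, sq]

lemma col_mul (A : Matrix (Fin n) (Fin r) ℝ) (W : Matrix (Fin r) (Fin m) ℝ) (j : Fin m) :
    (fun i => (A * W) i j) = A *ᵥ (fun k => W k j) := by
  funext i; simp [Matrix.mul_apply, Matrix.mulVec, dotProduct]

lemma row_mulVec (W : Matrix (Fin n) (Fin r) ℝ) (v : Fin r → ℝ) (i : Fin n) :
    (W *ᵥ v) i = (W i) ⬝ᵥ v := rfl

-- Lower bound: λmin(AᵀA) · frobSq W ≤ frobSq (A·W)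
lemma lower_bound_frobSq_mul (A : Matrix (Fin n) (Fin r) ℝ) (hA : (Aᵀ * A).IsHermitian)
    (W : Matrix (Fin r) (Fin m) ℝ) :
    (⨅ i, hA.eigenvalues i) * frobSq W ≤ frobSq (A * W) := by
  have key : ∀ (a b : Fin r → ℝ), (A *ᵥ a) ⬝ᵥ (A *ᵥ b) = a ⬝ᵥ ((Aᵀ * A) *ᵥ b) := by
    intro a b
    rw [Matrix.dotProduct_mulVec, ← Matrix.vecMul_transpose, Matrix.vecMul_vecMul,
      ← Matrix.dotProduct_mulVec]
  rw [frobSq_eq_sum_cols (A * W), frobSq_eq_sum_cols W, Finset.mul_sum]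
  apply Finset.sum_le_sum
  intro j _
  rw [col_mul, key]
  exact iInf_eig_mul_le (Aᵀ * A) hA _

lemma dot_self_nonneg (x : Fin r → ℝ) : 0 ≤ x ⬝ᵥ x :=
  Finset.sum_nonneg fun i _ => mul_self_nonneg _

-- Bessel inequalities
lemma bessel_one (a v : Fin r → ℝ) (hv : v ⬝ᵥ v = 1) : (a ⬝ᵥ v) ^ 2 ≤ a ⬝ᵥ a := by
  have h := dot_self_nonneg (a - (a ⬝ᵥ v) • v)
  simp only [sub_dotProduct, dotProduct_sub, smul_dotProduct,
    dotProduct_smul, smul_eq_mul] at h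
  have hc : v ⬝ᵥ a = a ⬝ᵥ v := dotProduct_comm v a
  rw [hc, hv] at h
  nlinarith [h]

lemma bessel_two (a v w : Fin r → ℝ) (hv : v ⬝ᵥ v = 1) (hw : w ⬝ᵥ w = 1)
    (hvw : v ⬝ᵥ w = 0) : (a ⬝ᵥ v) ^ 2 + (a ⬝ᵥ w) ^ 2 ≤ a ⬝ᵥ a := by
  have h := dot_self_nonneg (a - (a ⬝ᵥ v) • v - (a ⬝ᵥ w) • w)
  simp only [sub_dotProduct, dotProduct_sub, smul_dotProduct,
    dotProduct_smul, smul_eq_mul] at h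
  have h1 : v ⬝ᵥ a = a ⬝ᵥ v := dotProduct_comm v a
  have h2 : w ⬝ᵥ a = a ⬝ᵥ w := dotProduct_comm w a
  have h3 : w ⬝ᵥ v = v ⬝ᵥ w := dotProduct_comm w v
  rw [h1, h2, h3, hv, hw, hvw] at h
  nlinarith [h]

-- quadratic form bounds by frobSq, for orthonormal vectors
lemma quad_single_le (W : Matrix (Fin r) (Fin r) ℝ) (v : Fin r → ℝ) (hv : v ⬝ᵥ v = 1) :
    (W *ᵥ v) ⬝ᵥ (W *ᵥ v) ≤ frobSq W := by
  rw [frobSq_eq_sum_rows]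
  have : (W *ᵥ v) ⬝ᵥ (W *ᵥ v) = ∑ i, ((W i) ⬝ᵥ v) ^ 2 := by
    simp [dotProduct, row_mulVec, sq]
  rw [this]
  apply Finset.sum_le_sum
  intro i _
  exact bessel_one (W i) v hv

lemma quad_pair_le (W : Matrix (Fin r) (Fin r) ℝ) (v w : Fin r → ℝ) (hv : v ⬝ᵥ v = 1)
    (hw : w ⬝ᵥ w = 1) (hvw : v ⬝ᵥ w = 0) :
    (W *ᵥ v) ⬝ᵥ (W *ᵥ v) + (W *ᵥ w) ⬝ᵥ (W *ᵥ w) ≤ frobSq W := by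
  rw [frobSq_eq_sum_rows]
  have h1 : (W *ᵥ v) ⬝ᵥ (W *ᵥ v) = ∑ i, ((W i) ⬝ᵥ v) ^ 2 := by
    simp [dotProduct, row_mulVec, sq]
  have h2 : (W *ᵥ w) ⬝ᵥ (W *ᵥ w) = ∑ i, ((W i) ⬝ᵥ w) ^ 2 := by
    simp [dotProduct, row_mulVec, sq]
  rw [h1, h2, ← Finset.sum_add_distrib]
  apply Finset.sum_le_sum
  intro i _
  exact bessel_two (W i) v w hv hw hvw




lemma transpose_stdBasisMatrix (i j : Fin r) (c : ℝ) :
    (Matrix.single i j c)ᵀ = Matrix.single j i c := by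
  ext a b
  simp only [Matrix.transpose_apply, Matrix.single, Matrix.of_apply]
  by_cases h1 : i = b <;> by_cases h2 : j = a <;> simp [h1, h2, and_comm]

lemma trace_mul_stdBasisMatrix (M : Matrix (Fin r) (Fin r) ℝ) (i j : Fin r) (c : ℝ) :
    (M * Matrix.single i j c).trace = c * M j i := by
  rw [Matrix.trace_mul_comm]
  rw [Matrix.trace]
  have : ∀ k, (Matrix.single i j c * M).diag k = if k = i then c * M j k else 0 := by
    intro k
    by_cases hk : k = i
    · subst hk; simp [Matrix.diag, Matrix.single_mul_apply_same]
    · simp [Matrix.diag, Matrix.single_mul_apply_of_ne, hk]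
  simp only [this]
  simp

noncomputable def givens (i j : Fin r) (φ : ℝ) : Matrix (Fin r) (Fin r) ℝ :=
  1 + (Real.cos φ - 1) • (Matrix.single i i (1:ℝ) + Matrix.single j j (1:ℝ))
    + Real.sin φ • (Matrix.single j i (1:ℝ) - Matrix.single i j (1:ℝ))

lemma givens_orth (i j : Fin r) (hij : i ≠ j) (φ : ℝ) :
    (givens i j φ)ᵀ * givens i j φ = 1 := by
  set a := Real.cos φ - 1 with ha
  set b := Real.sin φ with hb
  set P : Matrix (Fin r) (Fin r) ℝ := Matrix.single i i (1:ℝ) + Matrix.single j j (1:ℝ) with hP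
  set K : Matrix (Fin r) (Fin r) ℝ := Matrix.single j i (1:ℝ) - Matrix.single i j (1:ℝ) with hK
  have hPt : Pᵀ = P := by
    rw [hP, Matrix.transpose_add, transpose_stdBasisMatrix, transpose_stdBasisMatrix, add_comm]
  have hKt : Kᵀ = -K := by
    rw [hK, Matrix.transpose_sub, transpose_stdBasisMatrix, transpose_stdBasisMatrix]
    rw [neg_sub]
  have hPP : P * P = P := by
    rw [hP]
    rw [Matrix.add_mul, Matrix.mul_add, Matrix.mul_add]
    rw [Matrix.single_mul_single_same, Matrix.single_mul_single_of_ne _ _ _ _ hij,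
      Matrix.single_mul_single_of_ne _ _ _ _ (Ne.symm hij), Matrix.single_mul_single_same]
    simp
  have hKK : K * K = -P := by
    rw [hK, hP]
    rw [Matrix.sub_mul, Matrix.mul_sub, Matrix.mul_sub]
    rw [Matrix.single_mul_single_of_ne _ _ _ _ (Ne.symm hij), Matrix.single_mul_single_same,
      Matrix.single_mul_single_same, Matrix.single_mul_single_of_ne _ _ _ _ hij]
    simp only [one_mul]
    abel
  have hPK : P * K = K := by
    rw [hP, hK]
    rw [Matrix.add_mul, Matrix.mul_sub, Matrix.mul_sub]
    rw [Matrix.single_mul_single_of_ne _ _ _ _ (Ne.symm hij), Matrix.single_mul_single_same,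
      Matrix.single_mul_single_same, Matrix.single_mul_single_of_ne _ _ _ _ hij]
    simp only [one_mul]
    abel
  have hKP : K * P = K := by
    rw [hP, hK]
    rw [Matrix.sub_mul, Matrix.mul_add, Matrix.mul_add]
    rw [Matrix.single_mul_single_same, Matrix.single_mul_single_of_ne _ _ _ _ (Ne.symm hij),
      Matrix.single_mul_single_of_ne _ _ _ _ hij, Matrix.single_mul_single_same]
    simp only [one_mul]
    abel
  have hG : givens i j φ = 1 + a • P + b • K := rfl
  have hGt : (1 + a • P + b • K)ᵀ = 1 + a • P - b • K := by
    rw [Matrix.transpose_add, Matrix.transpose_add, Matrix.transpose_one,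
      Matrix.transpose_smul, Matrix.transpose_smul, hPt, hKt, smul_neg]
    abel
  rw [hG, hGt]
  have expand : (1 + a • P - b • K) * (1 + a • P + b • K)
      = 1 + (2*a + a^2 + b^2) • P := by
    simp only [Matrix.add_mul, Matrix.sub_mul, Matrix.mul_add, Matrix.mul_sub,
      Matrix.one_mul, Matrix.mul_one, Matrix.smul_mul, Matrix.mul_smul, hPP, hKK, hPK, hKP,
      smul_smul, smul_neg]
    module
  rw [expand]
  have : 2*a + a^2 + b^2 = 0 := by
    rw [ha, hb]
    nlinarith [Real.sin_sq_add_cos_sq φ]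
  rw [this, zero_smul, add_zero]

lemma trace_mul_givens (N : Matrix (Fin r) (Fin r) ℝ) (i j : Fin r) (φ : ℝ) :
    (N * givens i j φ).trace = N.trace + (Real.cos φ - 1) * (N i i + N j j)
      + Real.sin φ * (N i j - N j i) := by
  rw [givens]
  rw [Matrix.mul_add, Matrix.mul_add, Matrix.trace_add, Matrix.trace_add, Matrix.mul_one]
  rw [Matrix.mul_smul, Matrix.mul_smul, Matrix.trace_smul, Matrix.trace_smul]
  rw [Matrix.mul_add, Matrix.trace_add, Matrix.mul_sub, Matrix.trace_sub]
  rw [trace_mul_stdBasisMatrix, trace_mul_stdBasisMatrix, trace_mul_stdBasisMatrix,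
    trace_mul_stdBasisMatrix]
  simp only [smul_eq_mul, one_mul]
  try ring

-- small angle argument
lemma nonpos_of_sin_bound {c K : ℝ} (h : ∀ φ : ℝ, c * Real.sin φ ≤ (1 - Real.cos φ) * K) :
    c ≤ 0 := by
  by_contra hc
  push_neg at hc
  rcases le_or_gt K 0 with hK | hK
  · -- K ≤ 0 : use φ = π/2 : c * 1 ≤ (1 - 0) * K ≤ 0
    have := h (Real.pi/2)
    rw [Real.sin_pi_div_two, Real.cos_pi_div_two] at this
    nlinarith
  · -- K > 0
    have key : ∀ φ : ℝ, 0 < φ → φ ≤ 1 → c ≤ φ * K := by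
      intro φ hφ0 hφ1
      have hlt : φ < Real.pi / 2 := lt_of_le_of_lt hφ1 (by nlinarith [Real.pi_gt_three])
      have hsinpos : 0 < Real.sin φ := Real.sin_pos_of_pos_of_lt_pi hφ0 (by nlinarith [Real.pi_gt_three])
      have hcos : 0 ≤ Real.cos φ := Real.cos_nonneg_of_mem_Icc ⟨by linarith, le_of_lt hlt⟩
      have hsin_le : Real.sin φ ≤ φ := Real.sin_le hφ0.le
      have hone : 1 - Real.cos φ ≤ Real.sin φ ^ 2 := by
        have hpyth := Real.sin_sq_add_cos_sq φ
        have hc1 : Real.cos φ ≤ 1 := Real.cos_le_one φ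
        nlinarith
      have hb := h φ
      have : c * Real.sin φ ≤ Real.sin φ ^ 2 * K := by
        calc c * Real.sin φ ≤ (1 - Real.cos φ) * K := hb
          _ ≤ Real.sin φ ^ 2 * K := by nlinarith
      have hcsin : c ≤ Real.sin φ * K := by
        have hs := hsinpos
        nlinarith
      calc c ≤ Real.sin φ * K := hcsin
        _ ≤ φ * K := by nlinarith
    set φ0 := min 1 (c / (K + 1)) with hφ0
    have h1 : 0 < φ0 := lt_min one_pos (div_pos hc (by linarith))
    have h2 : φ0 ≤ 1 := min_le_left _ _
    have h3 := key φ0 h1 h2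
    have h4 : φ0 ≤ c / (K+1) := min_le_right _ _
    have h5 : φ0 * K ≤ (c/(K+1)) * K := by nlinarith
    have h6 : (c/(K+1)) * K < c := by
      rw [div_mul_eq_mul_div, div_lt_iff₀ (by linarith)]
      nlinarith
    linarith



lemma frobSq_neg (X : Matrix (Fin n) (Fin r) ℝ) : frobSq (-X) = frobSq X := by
  simp [frobSq]

lemma frobSq_sub (X Y : Matrix (Fin n) (Fin r) ℝ) :
    frobSq (X - Y) = frobSq X - 2 * (Xᵀ * Y).trace + frobSq Y := by
  rw [sub_eq_add_neg, frobSq_add, frobSq_neg, Matrix.mul_neg, Matrix.trace_neg]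
  ring

-- squared comparison from norm comparison
lemma frobSq_le_of_frobNorm_le {X Y : Matrix (Fin n) (Fin r) ℝ}
    (h : frobNorm X ≤ frobNorm Y) : frobSq X ≤ frobSq Y := by
  rw [← frobNorm_sq, ← frobNorm_sq]
  have := frobNorm_nonneg X
  nlinarith

-- derivation of the stationarity (symmetry of Rᵀ Aᵀ B)
lemma S_symm (A B : Matrix (Fin n) (Fin r) ℝ) (Rstar : Matrix (Fin r) (Fin r) ℝ)
    (hR : Rstarᵀ * Rstar = 1)
    (hmin : ∀ R : Matrix (Fin r) (Fin r) ℝ, Rᵀ * R = 1 →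
      frobNorm (A * Rstar - B) ≤ frobNorm (A * R - B)) :
    Bᵀ * A * Rstar = (Bᵀ * A * Rstar)ᵀ := by
  set N : Matrix (Fin r) (Fin r) ℝ := Bᵀ * A * Rstar with hN
  have key : ∀ i j : Fin r, i ≠ j → N i j - N j i ≤ 0 := by
    intro i j hij
    apply nonpos_of_sin_bound (K := N i i + N j j)
    intro φ
    have horth : (Rstar * givens i j φ)ᵀ * (Rstar * givens i j φ) = 1 := by
      rw [Matrix.transpose_mul, Matrix.mul_assoc, ← Matrix.mul_assoc Rstarᵀ, hR,
        Matrix.one_mul, givens_orth i j hij φ]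
    have hle := frobSq_le_of_frobNorm_le (hmin _ horth)
    rw [frobSq_sub, frobSq_sub] at hle
    have e1 : frobSq (A * Rstar) = frobSq A := frobSq_mul_orth A Rstar hR
    have e2 : frobSq (A * (Rstar * givens i j φ)) = frobSq A := by
      rw [← Matrix.mul_assoc]
      rw [frobSq_mul_orth]
      · exact frobSq_mul_orth A Rstar hR
      · exact givens_orth i j hij φ
    have e3 : ((A * (Rstar * givens i j φ))ᵀ * B).trace = (N * givens i j φ).trace := by
      rw [← Matrix.trace_transpose, Matrix.transpose_mul, Matrix.transpose_transpose]
      rw [hN, ← Matrix.mul_assoc, ← Matrix.mul_assoc]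
    have e4 : ((A * Rstar)ᵀ * B).trace = N.trace := by
      rw [← Matrix.trace_transpose, Matrix.transpose_mul, Matrix.transpose_transpose,
        hN, ← Matrix.mul_assoc]
    rw [e1, e2, e3, e4] at hle
    have h5 : (N * givens i j φ).trace ≤ N.trace := by linarith
    rw [trace_mul_givens] at h5
    nlinarith
  ext i j
  rw [Matrix.transpose_apply]
  rcases eq_or_ne i j with h | h
  · rw [h]
  · have h1 := key i j h
    have h2 := key j i (Ne.symm h)
    linarith

lemma C_psd (R : Matrix (Fin r) (Fin r) ℝ) (hR : Rᵀ * R = 1) (hRR : R * Rᵀ = 1)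
    (hWsmall : frobSq (R - 1) < 4) : (R + Rᵀ).PosSemidef := by
  have hherm : (R + Rᵀ).IsHermitian := by
    show (R + Rᵀ)ᴴ = R + Rᵀ
    rw [Matrix.conjTranspose_eq_transpose_of_trivial, Matrix.transpose_add,
      Matrix.transpose_transpose, add_comm]
  apply (Matrix.IsHermitian.posSemidef_iff_eigenvalues_nonneg hherm).mpr
  intro i
  by_contra hneg
  push_neg at hneg
  simp only [Pi.zero_apply] at hneg
  set c : ℝ := hherm.eigenvalues i with hc
  set v : Fin r → ℝ := ⇑(hherm.eigenvectorBasis i) with hv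
  have hv_eig : (R + Rᵀ) *ᵥ v = c • v := hherm.mulVec_eigenvectorBasis i
  have hv1 : v ⬝ᵥ v = 1 := by
    have hnorm : ‖hherm.eigenvectorBasis i‖ = 1 := hherm.eigenvectorBasis.orthonormal.1 i
    have h2 : (inner ℝ (hherm.eigenvectorBasis i) (hherm.eigenvectorBasis i) : ℝ) = 1 := by
      rw [real_inner_self_eq_norm_sq, hnorm]; norm_num
    rw [← h2]
    simp only [dotProduct, PiLp.inner_apply, RCLike.inner_apply, conj_trivial, hv]
  set W : Matrix (Fin r) (Fin r) ℝ := R - 1 with hW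
  have hWtW : Wᵀ * W = 1 + 1 - (R + Rᵀ) := by
    rw [hW, Matrix.transpose_sub, Matrix.transpose_one, Matrix.sub_mul, Matrix.mul_sub,
      Matrix.mul_sub, hR, Matrix.one_mul, Matrix.mul_one, Matrix.one_mul]
    abel
  have hdecomp : ∀ x : Fin r → ℝ, (W *ᵥ x) ⬝ᵥ (W *ᵥ x)
      = (x ⬝ᵥ x) + (x ⬝ᵥ x) - x ⬝ᵥ ((R + Rᵀ) *ᵥ x) := by
    intro x
    rw [dot_mulVec_self, hWtW, Matrix.sub_mulVec, Matrix.add_mulVec, Matrix.one_mulVec,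
      dotProduct_sub, dotProduct_add]
  set u : Fin r → ℝ := (R - Rᵀ) *ᵥ v with hu
  rcases eq_or_ne u 0 with h0 | h0
  · -- flip case
    have hRv : R *ᵥ v = Rᵀ *ᵥ v := by
      have := h0
      rw [hu, Matrix.sub_mulVec] at this
      exact sub_eq_zero.mp this
    have hRv2 : R *ᵥ v + R *ᵥ v = c • v := by
      have := hv_eig
      rw [Matrix.add_mulVec, ← hRv] at this
      exact this
    have hnorm1 : (R *ᵥ v) ⬝ᵥ (R *ᵥ v) = 1 := by
      rw [dot_mulVec_self, hR, Matrix.one_mulVec, hv1]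
    have hcsq : c ^ 2 = 4 := by
      have h3 : (R *ᵥ v + R *ᵥ v) ⬝ᵥ (R *ᵥ v + R *ᵥ v) = 4 := by
        simp only [dotProduct_add, add_dotProduct, hnorm1]
        norm_num
      rw [hRv2, dotProduct_smul, smul_dotProduct, hv1] at h3
      simp only [smul_eq_mul, mul_one] at h3
      nlinarith [h3]
    have hcneg2 : c = -2 := by
      have hfac : (c - 2) * (c + 2) = 0 := by nlinarith
      rcases mul_eq_zero.mp hfac with h | h
      · nlinarith
      · linarith
    have hq := quad_single_le W v hv1
    rw [hdecomp v, hv1, hv_eig, dotProduct_smul, hv1] at hq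
    simp only [smul_eq_mul, mul_one] at hq
    linarith [hq, hWsmall, hcneg2]
  · -- rotation pair case
    have hupos : 0 < u ⬝ᵥ u :=
      lt_of_le_of_ne (dot_self_nonneg u) fun h => h0 (dotProduct_self_eq_zero.mp h.symm)
    set s : ℝ := Real.sqrt (u ⬝ᵥ u) with hs
    have hspos : 0 < s := Real.sqrt_pos.mpr hupos
    set w : Fin r → ℝ := s⁻¹ • u with hw'
    have hw1 : w ⬝ᵥ w = 1 := by
      rw [hw', smul_dotProduct, dotProduct_smul, smul_eq_mul, smul_eq_mul]
      rw [← mul_assoc, ← mul_inv, hs, Real.mul_self_sqrt hupos.le]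
      exact inv_mul_cancel₀ (ne_of_gt hupos)
    have hvu : v ⬝ᵥ u = 0 := by
      rw [hu, Matrix.sub_mulVec, dotProduct_sub]
      have : v ⬝ᵥ (Rᵀ *ᵥ v) = v ⬝ᵥ (R *ᵥ v) := by
        rw [Matrix.dotProduct_mulVec, ← Matrix.mulVec_transpose, Matrix.transpose_transpose]
        exact dotProduct_comm _ _
      rw [this, sub_self]
    have hvw : v ⬝ᵥ w = 0 := by
      rw [hw', dotProduct_smul, hvu, smul_eq_mul, mul_zero]
    have hcomm : (R + Rᵀ) * (R - Rᵀ) = (R - Rᵀ) * (R + Rᵀ) := by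
      rw [Matrix.add_mul, Matrix.mul_sub, Matrix.mul_sub, Matrix.sub_mul, Matrix.mul_add,
        Matrix.mul_add, hR, hRR]
      abel
    have hCu : (R + Rᵀ) *ᵥ u = c • u := by
      rw [hu, Matrix.mulVec_mulVec, hcomm, ← Matrix.mulVec_mulVec, hv_eig, Matrix.mulVec_smul]
    have hCw : (R + Rᵀ) *ᵥ w = c • w := by
      rw [hw', Matrix.mulVec_smul, hCu, smul_comm]
    have hq := quad_pair_le W v w hv1 hw1 hvw
    rw [hdecomp v, hdecomp w, hv1, hw1, hv_eig, hCw] at hq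
    simp only [dotProduct_smul, smul_eq_mul, hv1, hw1, mul_one] at hq
    linarith




lemma trace_psd_mul_nonneg (P Q : Matrix (Fin r) (Fin r) ℝ) (hP : P.PosSemidef)
    (hQ : Q.PosSemidef) : 0 ≤ (P * Q).trace := by
  obtain ⟨X, hX⟩ : ∃ X : Matrix (Fin r) (Fin r) ℝ, P = Xᴴ * X := by
    open scoped MatrixOrder Matrix.Norms.L2Operator in
    obtain ⟨B, hB⟩ := CStarAlgebra.nonneg_iff_eq_star_mul_self.mp hP.nonneg
    exact ⟨B, hB⟩
  obtain ⟨Y, hY⟩ : ∃ Y : Matrix (Fin r) (Fin r) ℝ, Q = Yᴴ * Y := by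
    open scoped MatrixOrder Matrix.Norms.L2Operator in
    obtain ⟨B, hB⟩ := CStarAlgebra.nonneg_iff_eq_star_mul_self.mp hQ.nonneg
    exact ⟨B, hB⟩
  rw [Matrix.conjTranspose_eq_transpose_of_trivial] at hX hY
  rw [hX, hY]
  have h1 : Xᵀ * X * (Yᵀ * Y) = Xᵀ * (X * Yᵀ * Y) := by
    simp only [Matrix.mul_assoc]
  rw [h1, Matrix.trace_mul_comm]
  have h2 : X * Yᵀ * Y * Xᵀ = (Y * Xᵀ)ᵀ * (Y * Xᵀ) := by
    rw [Matrix.transpose_mul, Matrix.transpose_transpose, Matrix.mul_assoc]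
  rw [h2, ← frobSq_eq_trace]
  exact Finset.sum_nonneg fun i _ => Finset.sum_nonneg fun j _ => sq_nonneg _

lemma key_identity (A B : Matrix (Fin n) (Fin r) ℝ) (R : Matrix (Fin r) (Fin r) ℝ)
    (hR : Rᵀ * R = 1) (hRR : R * Rᵀ = 1) (hsym : Bᵀ * A * R = (Bᵀ * A * R)ᵀ) :
    frobSq (A * (R - 1)) + frobSq (B * (R - 1)ᵀ)
      + (((A * R - B)ᵀ * (A * R - B)) * (R + Rᵀ)).trace = 2 * frobSq (A - B) := by
  simp only [frobSq_eq_trace, Matrix.transpose_sub, Matrix.transpose_mul, Matrix.transpose_one,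
    Matrix.transpose_transpose, Matrix.sub_mul, Matrix.mul_sub, Matrix.add_mul, Matrix.mul_add,
    Matrix.mul_one, Matrix.one_mul, Matrix.trace_add, Matrix.trace_sub, Matrix.mul_assoc]
  have hsym' : Bᵀ * (A * R) = Rᵀ * (Aᵀ * B) := by
    have := hsym
    simp only [Matrix.transpose_mul, Matrix.transpose_transpose, Matrix.mul_assoc] at this
    exact this
  have e12 : (Bᵀ * A).trace = (Aᵀ * B).trace := by
    rw [← Matrix.trace_transpose (Bᵀ * A)]
    simp only [Matrix.transpose_mul, Matrix.transpose_transpose]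
  have e1 : (Rᵀ * (Aᵀ * (A * R))).trace = (Aᵀ * A).trace := by
    rw [Matrix.trace_mul_comm]
    simp only [Matrix.mul_assoc, hRR, Matrix.mul_one]
  have e2 : (Rᵀ * (Aᵀ * A)).trace = (Aᵀ * (A * R)).trace := by
    rw [← Matrix.trace_transpose (Rᵀ * (Aᵀ * A))]
    simp only [Matrix.transpose_mul, Matrix.transpose_transpose, Matrix.mul_assoc]
  have e3 : (R * (Bᵀ * (B * Rᵀ))).trace = (Bᵀ * B).trace := by
    rw [Matrix.trace_mul_comm]
    simp only [Matrix.mul_assoc, hR, Matrix.mul_one]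
  have e4 : (R * (Bᵀ * B)).trace = (Bᵀ * (B * R)).trace := by
    rw [Matrix.trace_mul_comm]
    simp only [Matrix.mul_assoc]
  have e5 : (Bᵀ * (B * Rᵀ)).trace = (Bᵀ * (B * R)).trace := by
    rw [← Matrix.trace_transpose (Bᵀ * (B * Rᵀ))]
    simp only [Matrix.transpose_mul, Matrix.transpose_transpose]
    rw [Matrix.mul_assoc]
    exact e4
  have e6 : (Rᵀ * (Aᵀ * (A * (R * R)))).trace = (Aᵀ * (A * R)).trace := by
    rw [Matrix.trace_mul_comm]
    simp only [Matrix.mul_assoc, hRR, Matrix.mul_one]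
  have e7 : (Rᵀ * (Aᵀ * (A * (R * Rᵀ)))).trace = (Aᵀ * (A * R)).trace := by
    simp only [hRR, Matrix.mul_one]
    exact e2
  have e8 : (Bᵀ * (A * (R * R))).trace = (Aᵀ * B).trace := by
    have h : Bᵀ * (A * (R * R)) = (Bᵀ * (A * R)) * R := by simp only [Matrix.mul_assoc]
    rw [h, hsym', Matrix.trace_mul_comm, ← Matrix.mul_assoc, hRR, Matrix.one_mul]
  have e9 : (Rᵀ * (Aᵀ * (B * R))).trace = (Aᵀ * B).trace := by
    have h : Rᵀ * (Aᵀ * (B * R)) = (Rᵀ * (Aᵀ * B)) * R := by simp only [Matrix.mul_assoc]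
    rw [h, Matrix.trace_mul_comm, ← Matrix.mul_assoc, hRR, Matrix.one_mul]
  have e10 : (Bᵀ * (A * (R * Rᵀ))).trace = (Aᵀ * B).trace := by
    simp only [hRR, Matrix.mul_one]
    exact e12
  have e11 : (Rᵀ * (Aᵀ * (B * Rᵀ))).trace = (Aᵀ * B).trace := by
    have h : Rᵀ * (Aᵀ * (B * Rᵀ)) = (Bᵀ * (A * R)) * Rᵀ := by
      rw [hsym']
      simp only [Matrix.mul_assoc]
    rw [h]
    simp only [Matrix.mul_assoc, hRR, Matrix.mul_one]
    exact e12
  rw [e1, e2, e3, e4, e5, e6, e7, e8, e9, e10, e11, e12]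
  ring


lemma le_of_sq_le_sq {a b : ℝ} (ha : 0 ≤ a) (hb : 0 ≤ b) (h : a ^ 2 ≤ b ^ 2) : a ≤ b := by
  nlinarith

lemma frobNorm_neg (X : Matrix (Fin n) (Fin r) ℝ) : frobNorm (-X) = frobNorm X := by
  unfold frobNorm
  rw [frobSq_neg]

end ProcAux

set_option maxHeartbeats 1000000 in
/-- Perturbation bound for the orthogonal Procrustes rotation
(Mathias 1993): if `σ_r(B) > 0` and `‖A − B‖_F < σ_r(B)`, and `R*` minimizes `‖AR − B‖_F`
over orthogonal matrices, then `‖R* − I‖_F ≤ 2‖A − B‖_F/(σ_r(A) + σ_r(B))`. -/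
theorem procrustes_rotation_perturbation {n r : ℕ} (hnr : r ≤ n)
    (A B : Matrix (Fin n) (Fin r) ℝ)
    (hA : (Aᵀ * A).IsHermitian) (hB : (Bᵀ * B).IsHermitian)
    (hBpos : 0 < smallestSingular B hB)
    (hclose : frobNorm (A - B) < smallestSingular B hB)
    (Rstar : Matrix (Fin r) (Fin r) ℝ) (hR : Rstarᵀ * Rstar = 1)
    (hmin : ∀ R : Matrix (Fin r) (Fin r) ℝ, Rᵀ * R = 1 →
      frobNorm (A * Rstar - B) ≤ frobNorm (A * R - B)) :
    frobNorm (Rstar - 1) ≤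
      2 * frobNorm (A - B) / (smallestSingular A hA + smallestSingular B hB) := by
  classical
  have hRR : Rstar * Rstarᵀ = 1 := mul_eq_one_comm.mp hR
  have hσA0 : 0 ≤ smallestSingular A hA := Real.sqrt_nonneg _
  have hσB0 : 0 ≤ smallestSingular B hB := Real.sqrt_nonneg _
  have hε0 : 0 ≤ frobNorm (A - B) := ProcAux.frobNorm_nonneg _
  have hDle : frobNorm (A * Rstar - B) ≤ frobNorm (A - B) := by
    have := hmin 1 (by simp)
    rwa [Matrix.mul_one] at this
  have hPSDA : (Aᵀ * A).PosSemidef := by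
    rw [← Matrix.conjTranspose_eq_transpose_of_trivial]
    exact Matrix.posSemidef_conjTranspose_mul_self A
  have hPSDB : (Bᵀ * B).PosSemidef := by
    rw [← Matrix.conjTranspose_eq_transpose_of_trivial]
    exact Matrix.posSemidef_conjTranspose_mul_self B
  have hiA : 0 ≤ ⨅ i, hA.eigenvalues i := by
    rcases isEmpty_or_nonempty (Fin r) with hre | hre
    · rw [Real.iInf_of_isEmpty]
    · exact le_ciInf fun i => hPSDA.eigenvalues_nonneg i
  have hiB : 0 ≤ ⨅ i, hB.eigenvalues i := by
    rcases isEmpty_or_nonempty (Fin r) with hre | hre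
    · rw [Real.iInf_of_isEmpty]
    · exact le_ciInf fun i => hPSDB.eigenvalues_nonneg i
  have hσA2 : smallestSingular A hA ^ 2 = ⨅ i, hA.eigenvalues i := Real.sq_sqrt hiA
  have hσB2 : smallestSingular B hB ^ 2 = ⨅ i, hB.eigenvalues i := Real.sq_sqrt hiB
  have hlbA : smallestSingular A hA ^ 2 * frobSq (Rstar - 1) ≤ frobSq (A * (Rstar - 1)) := by
    rw [hσA2]; exact ProcAux.lower_bound_frobSq_mul A hA (Rstar - 1)
  have hlbB : smallestSingular B hB ^ 2 * frobSq (Rstar - 1) ≤ frobSq (B * (Rstar - 1)ᵀ) := by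
    rw [hσB2]
    have h := ProcAux.lower_bound_frobSq_mul B hB (Rstar - 1)ᵀ
    rwa [ProcAux.frobSq_transpose] at h
  have hBW : B * (Rstar - 1)ᵀ = (A - B) + -((A * Rstar - B) * Rstarᵀ) := by
    rw [Matrix.transpose_sub, Matrix.transpose_one, Matrix.mul_sub, Matrix.mul_one,
      Matrix.sub_mul, Matrix.mul_assoc, hRR, Matrix.mul_one]
    abel
  have hDR : frobNorm ((A * Rstar - B) * Rstarᵀ) = frobNorm (A * Rstar - B) := by
    unfold frobNorm
    rw [ProcAux.frobSq_mul_orth _ Rstarᵀ (by rw [Matrix.transpose_transpose]; exact hRR)]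
  have h2eps : frobNorm (B * (Rstar - 1)ᵀ) ≤ 2 * frobNorm (A - B) := by
    rw [hBW]
    refine le_trans (ProcAux.frobNorm_add_le _ _) ?_
    rw [ProcAux.frobNorm_neg, hDR]
    linarith
  have hbw : smallestSingular B hB * frobNorm (Rstar - 1) ≤ frobNorm (B * (Rstar - 1)ᵀ) := by
    apply ProcAux.le_of_sq_le_sq (mul_nonneg hσB0 (ProcAux.frobNorm_nonneg (Rstar - 1)))
      (ProcAux.frobNorm_nonneg _)
    rw [mul_pow, ProcAux.frobNorm_sq, ProcAux.frobNorm_sq]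
    exact hlbB
  have haw : smallestSingular A hA * frobNorm (Rstar - 1) ≤ frobNorm (A * (Rstar - 1)) := by
    apply ProcAux.le_of_sq_le_sq (mul_nonneg hσA0 (ProcAux.frobNorm_nonneg (Rstar - 1)))
      (ProcAux.frobNorm_nonneg _)
    rw [mul_pow, ProcAux.frobNorm_sq, ProcAux.frobNorm_sq]
    exact hlbA
  have hWn2 : frobNorm (Rstar - 1) < 2 := by
    have h1 : smallestSingular B hB * frobNorm (Rstar - 1) ≤ 2 * frobNorm (A - B) :=
      le_trans hbw h2eps
    nlinarith [ProcAux.frobNorm_nonneg (Rstar - 1), hclose, hBpos]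
  have hWlt : frobSq (Rstar - 1) < 4 := by
    have h2 := ProcAux.frobNorm_sq (Rstar - 1)
    nlinarith [ProcAux.frobNorm_nonneg (Rstar - 1)]
  have hsymN : Bᵀ * A * Rstar = (Bᵀ * A * Rstar)ᵀ := ProcAux.S_symm A B Rstar hR hmin
  have hCpsd : (Rstar + Rstarᵀ).PosSemidef := ProcAux.C_psd Rstar hR hRR hWlt
  have hDpsd : ((A * Rstar - B)ᵀ * (A * Rstar - B)).PosSemidef := by
    rw [← Matrix.conjTranspose_eq_transpose_of_trivial]
    exact Matrix.posSemidef_conjTranspose_mul_self _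
  have htr : 0 ≤ (((A * Rstar - B)ᵀ * (A * Rstar - B)) * (Rstar + Rstarᵀ)).trace :=
    ProcAux.trace_psd_mul_nonneg _ _ hDpsd hCpsd
  have hid := ProcAux.key_identity A B Rstar hR hRR hsymN
  have hsum : frobSq (A * (Rstar - 1)) + frobSq (B * (Rstar - 1)ᵀ)
      ≤ 2 * frobNorm (A - B) ^ 2 := by
    rw [ProcAux.frobNorm_sq]
    linarith [hid, htr]
  have hab : frobNorm (A * (Rstar - 1)) + frobNorm (B * (Rstar - 1)ᵀ)
      ≤ 2 * frobNorm (A - B) := by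
    have hx := ProcAux.frobNorm_sq (A * (Rstar - 1))
    have hy := ProcAux.frobNorm_sq (B * (Rstar - 1)ᵀ)
    have hx0 := ProcAux.frobNorm_nonneg (A * (Rstar - 1))
    have hy0 := ProcAux.frobNorm_nonneg (B * (Rstar - 1)ᵀ)
    nlinarith [sq_nonneg (frobNorm (A * (Rstar - 1)) - frobNorm (B * (Rstar - 1)ᵀ)), hsum]
  have hfinal : (smallestSingular A hA + smallestSingular B hB) * frobNorm (Rstar - 1)
      ≤ 2 * frobNorm (A - B) := by
    have hexp : (smallestSingular A hA + smallestSingular B hB) * frobNorm (Rstar - 1)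
        = smallestSingular A hA * frobNorm (Rstar - 1)
          + smallestSingular B hB * frobNorm (Rstar - 1) := by ring
    linarith [hexp, haw, hbw, hab]
  have hpos : 0 < smallestSingular A hA + smallestSingular B hB := by linarith [hBpos]
  rw [le_div_iff₀ hpos]
  linarith [hfinal]
end
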